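/- arXiv:2310.09369 — 3 statements merged into one kernel-verified Lean document; each statement's English description precedes it below -/
import Mathlib

section
/- For all real x ∈ [0,1] and all integers n ≥ 3, one has 1 − I(1 − x²; (n−1)/2, 1/2) ≤ 2e · (n−1) · x · B((n−1)/2, 1/2), where e is Euler's number. -/
/-- The Beta function `B(a,b) = ∫_0^1 t^{a-1} (1-t)^{b-1} dt`. -/
noncomputable def betaFn (a b : ℝ) : ℝ :=
  ∫ t in (0:ℝ)..1, t ^ (a - 1) * (1 - t) ^ (b - 1)

/-- The regularized incomplete Beta function
`I(x; a, b) = (1/B(a,b)) ∫_0^x t^{a-1} (1-t)^{b-1} dt`. -/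
noncomputable def regIncompleteBeta (x a b : ℝ) : ℝ :=
  (∫ t in (0:ℝ)..x, t ^ (a - 1) * (1 - t) ^ (b - 1)) / betaFn a b

/-!
Splitting `B = B(a, 1/2)` at `1 - x²`, the quantity `1 - I` is the integral over `[1 - x², 1]`
divided by `B`, and bounding `t ^ (a - 1) ≤ 1` there shows that this integral is at most `2x`.
On `[1 - 1/(2a), 1]`, Bernoulli's inequality gives `t ^ (a - 1) ≥ 1/2`, whence
`B ≥ (2a)^(-1/2)`, i.e. `1/B ≤ 2aB = (n - 1)B`; the factor `e ≥ 1` is slack.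
-/

open intervalIntegral MeasureTheory Real

section BetaIntegral

variable {a b : ℝ}

lemma intervalIntegrable_one_sub_rpow (hb : 0 < b) (c d : ℝ) :
    IntervalIntegrable (fun t : ℝ => (1 - t) ^ (b - 1)) volume c d := by
  simpa using (intervalIntegrable_rpow' (r := b - 1) (by linarith)
    (a := 1 - c) (b := 1 - d)).comp_sub_left 1

lemma integral_one_sub_rpow (hb : 0 < b) (c : ℝ) :
    ∫ t in c..1, (1 - t) ^ (b - 1) = (1 - c) ^ b / b := by
  rw [integral_comp_sub_left (fun u => u ^ (b - 1)) 1, integral_rpow (Or.inl (by linarith))]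
  simp [zero_rpow hb.ne']

lemma intervalIntegrable_betaIntegrand (ha : 1 ≤ a) (hb : 0 < b) (c d : ℝ) :
    IntervalIntegrable (fun t : ℝ => t ^ (a - 1) * (1 - t) ^ (b - 1)) volume c d :=
  (intervalIntegrable_one_sub_rpow hb c d).continuousOn_mul
    (continuous_rpow_const (by linarith)).continuousOn

lemma integral_betaIntegrand_tail_le (ha : 1 ≤ a) (hb : 0 < b) {c : ℝ} (hc₀ : 0 ≤ c)
    (hc₁ : c ≤ 1) : ∫ t in c..1, t ^ (a - 1) * (1 - t) ^ (b - 1) ≤ (1 - c) ^ b / b := by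
  rw [← integral_one_sub_rpow hb c]
  refine integral_mono_on hc₁ (intervalIntegrable_betaIntegrand ha hb c 1)
    (intervalIntegrable_one_sub_rpow hb c 1) fun t ht => ?_
  exact mul_le_of_le_one_left (rpow_nonneg (by linarith [ht.2]) _)
    (rpow_le_one (hc₀.trans ht.1) ht.2 (by linarith))

lemma le_integral_betaIntegrand_tail (ha : 1 ≤ a) (hb : 0 < b) {s : ℝ} (hs₀ : 0 ≤ s)
    (hs₁ : s ≤ 1) :
    s ^ (a - 1) * ((1 - s) ^ b / b) ≤ ∫ t in s..1, t ^ (a - 1) * (1 - t) ^ (b - 1) := by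
  rw [← integral_one_sub_rpow hb s, ← intervalIntegral.integral_const_mul]
  refine integral_mono_on hs₁ ((intervalIntegrable_one_sub_rpow hb s 1).const_mul _)
    (intervalIntegrable_betaIntegrand ha hb s 1) fun t ht => ?_
  exact mul_le_mul_of_nonneg_right (rpow_le_rpow hs₀ ht.1 (by linarith))
    (rpow_nonneg (by linarith [ht.2]) _)

lemma integral_betaIntegrand_tail_le_betaFn (ha : 1 ≤ a) (hb : 0 < b) {s : ℝ} (hs₀ : 0 ≤ s)
    (hs₁ : s ≤ 1) : ∫ t in s..1, t ^ (a - 1) * (1 - t) ^ (b - 1) ≤ betaFn a b := by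
  rw [betaFn, ← integral_add_adjacent_intervals (intervalIntegrable_betaIntegrand ha hb 0 s)
    (intervalIntegrable_betaIntegrand ha hb s 1)]
  refine le_add_of_nonneg_left (integral_nonneg hs₀ fun t ht => ?_)
  exact mul_nonneg (rpow_nonneg ht.1 _) (rpow_nonneg (by linarith [ht.2, ht.1]) _)

lemma inv_two_mul_rpow_div_le_betaFn (ha : 1 ≤ a) (hb : 0 < b) :
    (2 * a)⁻¹ ^ b / (2 * b) ≤ betaFn a b := by
  set s := 1 - (2 * a)⁻¹
  have hinv : (2 * a)⁻¹ ≤ 1 / 2 := by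
    rw [inv_le_comm₀ (by linarith) (by norm_num)]; linarith
  have hs₀ : 0 < s := by linarith [hinv]
  have hs₁ : s ≤ 1 := by linarith [inv_nonneg.2 (by linarith : (0:ℝ) ≤ 2 * a)]
  have hbernoulli : 1 / 2 ≤ s ^ (a - 1) := calc
    (1 : ℝ) / 2 = 1 + a * -(2 * a)⁻¹ := by field_simp; norm_num
    _ ≤ s ^ a := one_add_mul_self_le_rpow_one_add (by linarith) ha
    _ ≤ s ^ (a - 1) := rpow_le_rpow_of_exponent_ge hs₀ hs₁ (by linarith)
  calc (2 * a)⁻¹ ^ b / (2 * b) = 1 / 2 * ((1 - s) ^ b / b) := by rw [sub_sub_cancel]; ring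
    _ ≤ s ^ (a - 1) * ((1 - s) ^ b / b) := by gcongr
    _ ≤ ∫ t in s..1, t ^ (a - 1) * (1 - t) ^ (b - 1) :=
        le_integral_betaIntegrand_tail ha hb hs₀.le hs₁
    _ ≤ betaFn a b := integral_betaIntegrand_tail_le_betaFn ha hb hs₀.le hs₁

lemma betaFn_pos (ha : 1 ≤ a) (hb : 0 < b) : 0 < betaFn a b := by
  have : 0 < a := by linarith
  exact lt_of_lt_of_le (by positivity) (inv_two_mul_rpow_div_le_betaFn ha hb)

lemma one_le_two_mul_mul_betaFn_half_sq (ha : 1 ≤ a) : 1 ≤ 2 * a * betaFn a (1 / 2) ^ 2 := by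
  have h := inv_two_mul_rpow_div_le_betaFn ha one_half_pos
  rw [← sqrt_eq_rpow, show 2 * (1 / 2 : ℝ) = 1 by norm_num, div_one,
    sqrt_le_left (betaFn_pos ha one_half_pos).le, inv_le_iff_one_le_mul₀ (by linarith)] at h
  exact h.trans_eq (mul_comm _ _)

lemma one_sub_regIncompleteBeta_eq (ha : 1 ≤ a) (hb : 0 < b) (c : ℝ) :
    1 - regIncompleteBeta c a b
      = (∫ t in c..1, t ^ (a - 1) * (1 - t) ^ (b - 1)) / betaFn a b := by
  have hB := (betaFn_pos ha hb).ne'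
  rw [regIncompleteBeta, eq_div_iff hB, sub_mul, div_mul_cancel₀ _ hB, one_mul, betaFn,
    ← integral_add_adjacent_intervals (intervalIntegrable_betaIntegrand ha hb 0 c)
      (intervalIntegrable_betaIntegrand ha hb c 1), add_sub_cancel_left]

end BetaIntegral

/-- For all `x ∈ [0,1]` and integers `n ≥ 3`,
`1 − I(1 − x²; (n−1)/2, 1/2) ≤ 2e · (n−1) · x · B((n−1)/2, 1/2)`. -/
theorem one_sub_regIncompleteBeta_le (x : ℝ) (hx : x ∈ Set.Icc (0:ℝ) 1)
    (n : ℕ) (hn : 3 ≤ n) :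
    1 - regIncompleteBeta (1 - x ^ 2) (((n:ℝ) - 1) / 2) (1 / 2)
      ≤ 2 * Real.exp 1 * ((n:ℝ) - 1) * x * betaFn (((n:ℝ) - 1) / 2) (1 / 2) := by
  obtain ⟨hx₀, hx₁⟩ := hx
  have hn₁ : (2 : ℝ) ≤ n - 1 := by
    have : (3 : ℝ) ≤ n := by exact_mod_cast hn
    linarith
  set a : ℝ := ((n:ℝ) - 1) / 2 with ha_def
  have ha : 1 ≤ a := by linarith
  set B := betaFn a (1 / 2)
  have hB := betaFn_pos ha one_half_pos
  calc 1 - regIncompleteBeta (1 - x ^ 2) a (1 / 2)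
      = (∫ t in (1 - x ^ 2)..1, t ^ (a - 1) * (1 - t) ^ (1 / 2 - 1)) / B :=
        one_sub_regIncompleteBeta_eq ha one_half_pos _
    _ ≤ (1 - (1 - x ^ 2)) ^ (1 / 2 : ℝ) / (1 / 2) / B := by
        gcongr
        exact integral_betaIntegrand_tail_le ha one_half_pos (by nlinarith) (by nlinarith)
    _ = 2 * x / B := by rw [sub_sub_cancel, ← sqrt_eq_rpow, sqrt_sq hx₀]; ring
    _ ≤ 2 * x * (2 * a * B ^ 2) / B :=
        div_le_div_of_nonneg_right
          (le_mul_of_one_le_right (by positivity) (one_le_two_mul_mul_betaFn_half_sq ha)) hB.le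
    _ = 2 * 1 * ((n:ℝ) - 1) * x * B := by rw [ha_def]; field_simp
    _ ≤ 2 * Real.exp 1 * ((n:ℝ) - 1) * x * B := by
        gcongr
        exact one_le_exp zero_le_one
end

section
/- Let n ≥ 3 and k ≥ 1 be integers. The sliced 1-Wasserstein distance SW₁ is a negative semi-definite kernel on the space of empirical measures of size k in ℝ^n: for every integer m > 0, empirical measures α_1, …, α_m of size k in ℝ^n, and real numbers a_1, …, a_m with ∑_i a_i = 0, one has ∑_{i,j} a_i a_j · SW₁(α_i, α_j) ≤ 0. -/
/-!
Projecting onto a direction `θ` turns the two empirical measures into `k` points on the line,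
and the optimal matching of two sorted `k`-tuples of reals is the sorted one. Hence, after sorting,
the integrand is `(1/k) ∑ₜ |sₜ - s'ₜ|`, a sum of kernels `|s - s'|`, each negative semi-definite
because `|s - s'| = ∫ (1_{s < x} - 1_{s' < x})² dx` and `∑ᵢⱼ aᵢ aⱼ (fᵢ - fⱼ)² = -2 (∑ᵢ aᵢ fᵢ)²`
when `∑ᵢ aᵢ = 0`. Negative semi-definiteness survives integrating over the sphere, which has finite
`(n-1)`-dimensional Hausdorff measure: it is covered by the radial projections of the `2n` faces
of the cube `[-1, 1]ⁿ`, and the radial projection is Lipschitz away from the unit ball.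
-/

open MeasureTheory
open scoped RealInnerProductSpace

/-- The sliced 1-Wasserstein distance between the empirical measures `(1/k)∑ δ_{xⁱ}` and
`(1/k)∑ δ_{yⁱ}` in `ℝ^n`:
`SW₁ = ∫_{𝕊^{n-1}} (1/k)·min_π ∑ᵢ |⟨xⁱ, θ⟩ − ⟨y^{π(i)}, θ⟩| dθ`, the integral being over
the unit sphere with its surface (Hausdorff) measure. -/
noncomputable def empSW1 {n k : ℕ} (x y : Fin k → EuclideanSpace ℝ (Fin n)) : ℝ :=
  ∫ θ in Metric.sphere (0 : EuclideanSpace ℝ (Fin n)) 1,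
    (1 / (k : ℝ)) * ⨅ π : Equiv.Perm (Fin k), ∑ i, |⟪x i, θ⟫ - ⟪y (π i), θ⟫|
    ∂ μH[(n:ℝ) - 1]

open Set

def IsNegSemidefKernel {X : Type*} (f : X → X → ℝ) : Prop :=
  ∀ (m : ℕ) (x : Fin m → X) (a : Fin m → ℝ), ∑ i, a i = 0 →
    ∑ i, ∑ j, a i * a j * f (x i) (x j) ≤ 0

namespace IsNegSemidefKernel

variable {X Y : Type*}

theorem comp {f : X → X → ℝ} (hf : IsNegSemidefKernel f) (g : Y → X) :
    IsNegSemidefKernel fun x y => f (g x) (g y) :=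
  fun m x a ha => hf m (g ∘ x) a ha

theorem sum {ι : Type*} (s : Finset ι) {f : ι → X → X → ℝ}
    (hf : ∀ t ∈ s, IsNegSemidefKernel (f t)) :
    IsNegSemidefKernel fun x y => ∑ t ∈ s, f t x y := by
  intro m x a ha
  simp_rw [Finset.mul_sum]
  rw [Finset.sum_congr rfl fun i _ => Finset.sum_comm, Finset.sum_comm]
  exact Finset.sum_nonpos fun t ht => hf t ht m x a ha

theorem const_mul {f : X → X → ℝ} (hf : IsNegSemidefKernel f) {c : ℝ} (hc : 0 ≤ c) :
    IsNegSemidefKernel fun x y => c * f x y := by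
  intro m x a ha
  have h : ∑ i, ∑ j, a i * a j * (c * f (x i) (x j)) =
      c * ∑ i, ∑ j, a i * a j * f (x i) (x j) := by
    simp_rw [Finset.mul_sum]
    exact Finset.sum_congr rfl fun i _ => Finset.sum_congr rfl fun j _ => by ring
  rw [h]
  exact mul_nonpos_of_nonneg_of_nonpos hc (hf m x a ha)

theorem integral {Θ : Type*} [MeasurableSpace Θ] {μ : Measure Θ} {f : Θ → X → X → ℝ}
    (hf : ∀ θ, IsNegSemidefKernel (f θ)) (hint : ∀ x y, Integrable (fun θ => f θ x y) μ) :
    IsNegSemidefKernel fun x y => ∫ θ, f θ x y ∂μ := by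
  intro m x a ha
  have hint' : ∀ i j, Integrable (fun θ => a i * a j * f θ (x i) (x j)) μ :=
    fun i j => (hint _ _).const_mul _
  calc ∑ i, ∑ j, a i * a j * ∫ θ, f θ (x i) (x j) ∂μ
      = ∫ θ, ∑ i, ∑ j, a i * a j * f θ (x i) (x j) ∂μ := by
        rw [integral_finsetSum _ fun i _ => integrable_finsetSum _ fun j _ => hint' i j]
        simp_rw [integral_finsetSum _ fun j _ => hint' _ j, integral_const_mul]
    _ ≤ 0 := integral_nonpos fun θ => hf θ m x a ha

end IsNegSemidefKernel

theorem isNegSemidefKernel_sub_sq {X : Type*} (g : X → ℝ) :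
    IsNegSemidefKernel fun x y => (g x - g y) ^ 2 := by
  intro m x a ha
  have h : ∀ i j, a i * a j * (g (x i) - g (x j)) ^ 2 = a j * (a i * g (x i) ^ 2)
      + a i * (a j * g (x j) ^ 2) - 2 * (a i * g (x i)) * (a j * g (x j)) := fun i j => by ring
  simp only [h, Finset.sum_add_distrib, Finset.sum_sub_distrib, ← Finset.sum_mul,
    ← Finset.mul_sum, ha, zero_mul, zero_add]
  nlinarith [sq_nonneg (∑ i, a i * g (x i))]

theorem indicator_Ioi_sub_indicator_Ioi_sq (s t x : ℝ) :
    ((Ioi s).indicator 1 x - (Ioi t).indicator 1 x) ^ 2 = (uIoc s t).indicator (1 : ℝ → ℝ) x := by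
  simp only [indicator, mem_Ioi, mem_uIoc, Pi.one_apply]
  split_ifs <;> grind

theorem integral_indicator_Ioi_sub_indicator_Ioi_sq (s t : ℝ) :
    ∫ x, ((Ioi s).indicator 1 x - (Ioi t).indicator 1 x) ^ 2 = |s - t| := by
  simp_rw [indicator_Ioi_sub_indicator_Ioi_sq, integral_indicator_one measurableSet_uIoc,
    measureReal_def, Real.volume_uIoc, ENNReal.toReal_ofReal (abs_nonneg _), abs_sub_comm]

theorem isNegSemidefKernel_abs_sub : IsNegSemidefKernel fun s t : ℝ => |s - t| := by
  have := IsNegSemidefKernel.integral (μ := volume)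
    (fun x => isNegSemidefKernel_sub_sq fun s => (Ioi s).indicator 1 x) fun (s t : ℝ) => by
      simp_rw [indicator_Ioi_sub_indicator_Ioi_sq]
      exact (integrable_indicator_iff measurableSet_uIoc).2
        (integrableOn_const (by simp [Real.volume_uIoc]))
  simpa only [integral_indicator_Ioi_sub_indicator_Ioi_sq] using this

theorem abs_sub_add_abs_sub_le_abs_sub_add_abs_sub {a b c d : ℝ} (hab : a ≤ b) (hcd : c ≤ d) :
    |a - c| + |b - d| ≤ |a - d| + |b - c| := by
  rcases abs_cases (a - c) with ⟨h₁, h₁'⟩ | ⟨h₁, h₁'⟩ <;>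
  rcases abs_cases (b - d) with ⟨h₂, h₂'⟩ | ⟨h₂, h₂'⟩ <;>
  rcases abs_cases (a - d) with ⟨h₃, h₃'⟩ | ⟨h₃, h₃'⟩ <;>
  rcases abs_cases (b - c) with ⟨h₄, h₄'⟩ | ⟨h₄, h₄'⟩ <;> linarith

open Equiv in
theorem Monotone.sum_abs_sub_le_sum_abs_sub_comp_perm {ι : Type*} [LinearOrder ι] [Fintype ι]
    {u v : ι → ℝ} (hu : Monotone u) (hv : Monotone v) (π : Perm ι) :
    ∑ i, |u i - v i| ≤ ∑ i, |u i - v (π i)| := by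
  -- Composing `π` with the transposition of its least moved point `i` and `π i` fixes `i`, so it
  -- shrinks the support, and by the exchange inequality it does not increase the cost.
  induction hN : π.support.card using Nat.strong_induction_on generalizing π with
  | _ N ih =>
  rcases eq_or_ne π 1 with rfl | hπ
  · simp
  have hne : π.support.Nonempty := by
    rwa [Finset.nonempty_iff_ne_empty, Ne, Perm.support_eq_empty_iff]
  set i := π.support.min' hne
  have hfix : ∀ t < i, π t = t := fun t ht =>
    Perm.notMem_support.1 fun h => (π.support.min'_le t h).not_gt ht
  have hπi : π i ≠ i := Perm.mem_support.1 (π.support.min'_mem hne)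
  have hi_lt : i < π i := lt_of_le_of_ne
    (not_lt.1 fun h => hπi (π.injective (hfix _ h))) hπi.symm
  set j := π.symm i
  have hπj : π j = i := π.apply_symm_apply i
  have hi_lt_j : i < j := lt_of_le_of_ne
    (not_lt.1 fun h => (hfix j h ▸ hπj ▸ h).false) fun h => hπi (h ▸ hπj)
  refine (ih _ (hN ▸ Perm.card_support_swap_mul hπi) _ rfl).trans ?_
  rw [← sub_nonneg, ← Finset.sum_sub_distrib, Fintype.sum_eq_add i j hi_lt_j.ne fun t ht => ?_]
  · have := abs_sub_add_abs_sub_le_abs_sub_add_abs_sub (hu hi_lt_j.le) (hv hi_lt.le)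
    simp only [Perm.mul_apply, swap_apply_left, hπj, swap_apply_right]
    linarith
  · rw [Perm.mul_apply, swap_apply_of_ne_of_ne (fun h => ht.2 (π.injective (h.trans hπj.symm)))
      (fun h => ht.1 (π.injective h)), sub_self]

noncomputable def matchingCost {k : ℕ} (u v : Fin k → ℝ) : ℝ :=
  ⨅ π : Equiv.Perm (Fin k), ∑ i, |u i - v (π i)|

theorem matchingCost_eq_sum_abs_sub_sort {k : ℕ} (u v : Fin k → ℝ) :
    matchingCost u v = ∑ i, |u (Tuple.sort u i) - v (Tuple.sort v i)| := by
  refine le_antisymm (ciInf_le_of_le (Finite.bddBelow_range _)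
    (Tuple.sort v * (Tuple.sort u)⁻¹) ?_) (le_ciInf fun π => ?_)
  · rw [← Equiv.sum_comp (Tuple.sort u)]
    simp
  · refine ((Tuple.monotone_sort u).sum_abs_sub_le_sum_abs_sub_comp_perm (Tuple.monotone_sort v)
      ((Tuple.sort v)⁻¹ * π * Tuple.sort u)).trans_eq ?_
    rw [← Equiv.sum_comp (Tuple.sort u) fun i => |u i - v (π i)|]
    simp

theorem matchingCost_nonneg {k : ℕ} (u v : Fin k → ℝ) : 0 ≤ matchingCost u v :=
  le_ciInf fun _ => Finset.sum_nonneg fun _ _ => abs_nonneg _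

theorem matchingCost_le_sum_abs_sub {k : ℕ} (u v : Fin k → ℝ) :
    matchingCost u v ≤ ∑ i, |u i - v i| :=
  ciInf_le_of_le (Finite.bddBelow_range _) 1 le_rfl

theorem isNegSemidefKernel_matchingCost (k : ℕ) : IsNegSemidefKernel (matchingCost (k := k)) := by
  have habs (t : Fin k) := isNegSemidefKernel_abs_sub.comp fun u : Fin k → ℝ => u t
  have hsum := (IsNegSemidefKernel.sum Finset.univ fun t _ => habs t).comp
    fun (u : Fin k → ℝ) t => u (Tuple.sort u t)
  intro m x a ha
  simpa only [matchingCost_eq_sum_abs_sub_sort] using hsum m x a ha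

theorem integrableOn_sphere_matchingCost_inner {E : Type*} [NormedAddCommGroup E]
    [InnerProductSpace ℝ E] [MeasurableSpace E] [OpensMeasurableSpace E] {μ : Measure E}
    (hμ : μ (Metric.sphere 0 1) ≠ ⊤) {k : ℕ} (x y : Fin k → E) :
    IntegrableOn (fun θ => matchingCost (fun i => ⟪x i, θ⟫) fun i => ⟪y i, θ⟫)
      (Metric.sphere 0 1) μ := by
  refine Measure.integrableOn_of_bounded (M := ∑ i, ‖x i - y i‖) hμ
    (Measurable.iInf fun π => by fun_prop).aestronglyMeasurable
    (ae_restrict_of_forall_mem Metric.isClosed_sphere.measurableSet fun θ hθ => ?_)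
  rw [Real.norm_of_nonneg (matchingCost_nonneg _ _)]
  refine (matchingCost_le_sum_abs_sub _ _).trans (Finset.sum_le_sum fun i _ => ?_)
  rw [← inner_sub_left]
  simpa [mem_sphere_zero_iff_norm.1 hθ] using abs_real_inner_le_norm (x i - y i) θ

theorem lipschitzOnWith_inv_norm_smul {E : Type*} [NormedAddCommGroup E] [NormedSpace ℝ E] :
    LipschitzOnWith 2 (fun x : E => ‖x‖⁻¹ • x) {x | 1 ≤ ‖x‖} := by
  refine LipschitzOnWith.of_dist_le_mul fun x (hx : 1 ≤ ‖x‖) y (hy : 1 ≤ ‖y‖) => ?_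
  have hx₀ : 0 < ‖x‖ := one_pos.trans_le hx
  have hy₀ : 0 < ‖y‖ := one_pos.trans_le hy
  have hcoef : |‖x‖⁻¹ - ‖y‖⁻¹| * ‖y‖ = ‖x‖⁻¹ * |‖y‖ - ‖x‖| := by
    have : (‖x‖⁻¹ - ‖y‖⁻¹) * ‖y‖ = ‖x‖⁻¹ * (‖y‖ - ‖x‖) := by field_simp
    rw [← abs_of_pos hy₀, ← abs_mul, abs_of_pos hy₀, this, abs_mul, abs_of_pos (inv_pos.2 hx₀)]
  have hxy : |‖y‖ - ‖x‖| ≤ ‖x - y‖ := norm_sub_rev y x ▸ abs_norm_sub_norm_le y x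
  calc dist (‖x‖⁻¹ • x) (‖y‖⁻¹ • y) = ‖‖x‖⁻¹ • (x - y) + (‖x‖⁻¹ - ‖y‖⁻¹) • y‖ := by
        rw [dist_eq_norm]; congr 1; module
    _ ≤ ‖x‖⁻¹ * ‖x - y‖ + ‖x‖⁻¹ * |‖y‖ - ‖x‖| := by
        grw [norm_add_le, norm_smul, norm_smul, Real.norm_eq_abs, Real.norm_eq_abs,
          abs_of_pos (inv_pos.2 hx₀), hcoef]
    _ ≤ ‖x - y‖ + ‖x - y‖ := by
        have hinv : ‖x‖⁻¹ ≤ 1 := inv_le_one_of_one_le₀ hx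
        exact add_le_add (mul_le_of_le_one_left (norm_nonneg _) hinv)
          ((mul_le_of_le_one_left (abs_nonneg _) hinv).trans hxy)
    _ = (2 : NNReal) * dist x y := by
        rw [dist_eq_norm]; push_cast; ring

namespace EuclideanSpace

variable {d : ℕ}

noncomputable def insertCoord (i : Fin (d + 1)) (c : ℝ) (y : EuclideanSpace ℝ (Fin d)) :
    EuclideanSpace ℝ (Fin (d + 1)) :=
  WithLp.toLp 2 (Fin.insertNth i c y.ofLp)

theorem isometry_insertCoord (i : Fin (d + 1)) (c : ℝ) : Isometry (insertCoord i c) :=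
  Isometry.of_dist_eq fun y z => by
    simp [EuclideanSpace.dist_eq, insertCoord, Fin.sum_univ_succAbove _ i]

theorem abs_le_norm_insertCoord (i : Fin (d + 1)) (c : ℝ) (y : EuclideanSpace ℝ (Fin d)) :
    |c| ≤ ‖insertCoord i c y‖ := by
  simpa [insertCoord] using PiLp.norm_apply_le (insertCoord i c y) i

def unitCube (d : ℕ) : Set (EuclideanSpace ℝ (Fin d)) :=
  WithLp.toLp 2 '' univ.pi fun _ => Icc (-1) 1

theorem isCompact_unitCube (d : ℕ) : IsCompact (unitCube d) :=
  (isCompact_univ_pi fun _ => isCompact_Icc).image (PiLp.continuous_toLp 2 _)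

theorem sphere_subset_iUnion_image_unitCube (d : ℕ) :
    Metric.sphere (0 : EuclideanSpace ℝ (Fin (d + 1))) 1 ⊆
      ⋃ i, ⋃ c ∈ ({1, -1} : Set ℝ), (fun x => ‖x‖⁻¹ • x) ∘ insertCoord i c '' unitCube d := by
  intro θ hθ
  rw [mem_sphere_zero_iff_norm] at hθ
  obtain ⟨i, hi⟩ := Finite.exists_max fun j => |θ j|
  have hc : 0 < |θ i| := by
    by_contra! h
    have : θ = 0 := by
      ext j
      exact abs_nonpos_iff.1 ((hi j).trans h)
    simp [this] at hθ
  set z := |θ i|⁻¹ • θ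
  have hz : ∀ j, |z j| = |θ j| / |θ i| := fun j => by
    simp [z, abs_mul, div_eq_inv_mul]
  simp only [mem_iUnion]
  refine ⟨i, z i, ?_, WithLp.toLp 2 (Fin.removeNth i z.ofLp), ?_, ?_⟩
  · have : |z i| = 1 := by rw [hz, div_self hc.ne']
    rcases (abs_eq zero_le_one).1 this with h | h <;> simp [h]
  · exact ⟨_, fun j _ => abs_le.1 ((hz _).trans_le ((div_le_one hc).2 (hi _))), rfl⟩
  · have hzθ : insertCoord i (z i) (WithLp.toLp 2 (Fin.removeNth i z.ofLp)) = z := by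
      simp [insertCoord]
    simp only [Function.comp_apply, hzθ, z, norm_smul, hθ, norm_inv, Real.norm_eq_abs, abs_abs,
      mul_one]
    rw [smul_smul, inv_inv, mul_inv_cancel₀ hc.ne', one_smul]

theorem hausdorffMeasure_image_unitCube_lt_top (i : Fin (d + 1)) {c : ℝ} (hc : 1 ≤ |c|) :
    μH[d] ((fun x => ‖x‖⁻¹ • x) ∘ insertCoord i c '' unitCube d) < ⊤ := by
  have hL : LipschitzOnWith (2 * 1) ((fun x => ‖x‖⁻¹ • x) ∘ insertCoord i c) (unitCube d) :=
    lipschitzOnWith_inv_norm_smul.comp (isometry_insertCoord i c).lipschitz.lipschitzOnWith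
      fun y _ => hc.trans (abs_le_norm_insertCoord i c y)
  exact (hL.hausdorffMeasure_image_le d.cast_nonneg).trans_lt
    (ENNReal.mul_lt_top (by simp) (isCompact_unitCube d).measure_lt_top)

theorem hausdorffMeasure_sphere_lt_top (n : ℕ) :
    μH[(n : ℝ) - 1] (Metric.sphere (0 : EuclideanSpace ℝ (Fin n)) 1) < ⊤ := by
  rcases n with _ | d
  · simp [Metric.sphere_eq_empty_of_subsingleton one_ne_zero]
  have hd : ((d + 1 : ℕ) : ℝ) - 1 = d := by push_cast; ring
  refine (measure_mono (sphere_subset_iUnion_image_unitCube d)).trans_lt ?_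
  refine (measure_iUnion_fintype_le _ _).trans_lt (ENNReal.sum_lt_top.2 fun i _ => ?_)
  refine measure_biUnion_lt_top (toFinite _) fun c hc => ?_
  rw [hd]
  refine hausdorffMeasure_image_unitCube_lt_top i (le_of_eq ?_)
  rcases hc with rfl | rfl <;> simp

end EuclideanSpace

-- The integrand of `empSW1 x y` at `θ` is, by definition, `(1/k) * matchingCost ⟪x ·, θ⟫ ⟪y ·, θ⟫`.
theorem isNegSemidefKernel_empSW1 (n k : ℕ) : IsNegSemidefKernel (empSW1 (n := n) (k := k)) := by
  have hθ (θ : EuclideanSpace ℝ (Fin n)) :=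
    ((isNegSemidefKernel_matchingCost k).comp
      fun (x : Fin k → EuclideanSpace ℝ (Fin n)) i => ⟪x i, θ⟫).const_mul (c := 1 / (k : ℝ))
      (by positivity)
  have hint (x y : Fin k → EuclideanSpace ℝ (Fin n)) :=
    (integrableOn_sphere_matchingCost_inner
      (EuclideanSpace.hausdorffMeasure_sphere_lt_top n).ne x y).const_mul (1 / (k : ℝ))
  exact IsNegSemidefKernel.integral hθ hint

theorem sw1_negative_semidefinite_general (n k : ℕ)
    (m : ℕ) (α : Fin m → (Fin k → EuclideanSpace ℝ (Fin n)))
    (a : Fin m → ℝ) (ha : ∑ i, a i = 0) :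
    ∑ i, ∑ j, a i * a j * empSW1 (α i) (α j) ≤ 0 :=
  isNegSemidefKernel_empSW1 n k m α a ha

/-- For `n ≥ 3`, `k ≥ 1`, the sliced 1-Wasserstein distance `SW₁` is a
negative semi-definite kernel on the space of empirical measures of size `k` in `ℝ^n`:
for every `m > 0`, empirical measures `α₁, …, α_m` and reals `a₁, …, a_m` with `∑ aᵢ = 0`,
`∑_{i,j} aᵢ aⱼ SW₁(αᵢ, αⱼ) ≤ 0`. -/
theorem sw1_negative_semidefinite (n k : ℕ) (hn : 3 ≤ n) (hk : 1 ≤ k)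
    (m : ℕ) (hm : 0 < m) (α : Fin m → (Fin k → EuclideanSpace ℝ (Fin n)))
    (a : Fin m → ℝ) (ha : ∑ i, a i = 0) :
    ∑ i, ∑ j, a i * a j * empSW1 (α i) (α j) ≤ 0 :=
  sw1_negative_semidefinite_general n k m α a ha
end

section
/- Let X be a metric space and let G = {g_1, …, g_k} be a finite group of order k acting on X by isometries. Then for all x, y ∈ X, min_{g ∈ G} d(x, g·y) = (1/k) · min_π ∑_{i=1}^k d(g_i·x, g_{π(i)}·y), where π ranges over all permutations of {1,…,k}. Consequently, the map [x] ↦ (1/k)∑_{i=1}^k δ_{g_i·x} is an isometric embedding of the orbit space X/G (with distance d([x],[y]) = min_{g∈G} d(x, g·y)) into 𝓔^k X. -/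
/-- Let `X` be a metric space and `G` a finite group of order `k` acting
on `X` by isometries. Then for all `x, y ∈ X`,
`min_{g ∈ G} d(x, g·y) = (1/k) · min_π ∑_{g ∈ G} d(g·x, π(g)·y)`, where `π` ranges over
all permutations of `G`.  Consequently (second conjunct, which expresses that the
assignment is well defined on orbits), the map `[x] ↦ (1/k)∑_{g ∈ G} δ_{g·x}` is an
isometric embedding of the orbit space `X/G` into `𝓔^k X` with its 1-Wasserstein
distance. -/
theorem orbit_dist_eq_wasserstein {X : Type*} [MetricSpace X]
    {G : Type*} [Group G] [Fintype G] [MulAction G X]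
    (hiso : ∀ g : G, Isometry fun x : X => g • x) :
    (∀ x y : X,
      (⨅ g : G, dist x (g • y)) =
        (1 / (Fintype.card G : ℝ)) *
          ⨅ π : Equiv.Perm G, ∑ g : G, dist (g • x) (π g • y)) ∧
    (∀ (x y : X) (h : G),
      (1 / (Fintype.card G : ℝ)) *
          (⨅ π : Equiv.Perm G, ∑ g : G, dist (g • (h • x)) (π g • y)) =
        (1 / (Fintype.card G : ℝ)) *
          ⨅ π : Equiv.Perm G, ∑ g : G, dist (g • x) (π g • y)) := by
  have hk : (0:ℝ) < (Fintype.card G : ℝ) := by exact_mod_cast Fintype.card_pos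
  have hdist : ∀ (g : G) (a b : X), dist (g • a) (g • b) = dist a b :=
    fun g a b => (hiso g).dist_eq a b
  have key : ∀ x y : X,
      (Fintype.card G : ℝ) * (⨅ g : G, dist x (g • y)) =
        ⨅ π : Equiv.Perm G, ∑ g : G, dist (g • x) (π g • y) := by
    intro x y
    obtain ⟨g₀, hg₀⟩ := Finite.exists_min fun g : G => dist x (g • y)
    have hm : (⨅ g : G, dist x (g • y)) = dist x (g₀ • y) :=
      le_antisymm (ciInf_le (Finite.bddBelow_range _) g₀) (le_ciInf hg₀)
    apply le_antisymm
    · apply le_ciInf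
      intro π
      rw [hm]
      have hterm : ∀ g : G, dist x (g₀ • y) ≤ dist (g • x) (π g • y) := by
        intro g
        have h1 : dist (g • x) (π g • y) = dist x ((g⁻¹ * π g) • y) := by
          rw [mul_smul, ← hdist g⁻¹ (g • x) (π g • y)]
          simp [smul_smul]
        rw [h1]
        exact hg₀ _
      calc (Fintype.card G : ℝ) * dist x (g₀ • y)
          = ∑ _g : G, dist x (g₀ • y) := by
            rw [Finset.sum_const, Finset.card_univ, nsmul_eq_mul]
        _ ≤ ∑ g : G, dist (g • x) (π g • y) := Finset.sum_le_sum fun g _ => hterm g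
    · have hsum : (∑ g : G, dist (g • x) ((Equiv.mulRight g₀ g) • y)) =
          (Fintype.card G : ℝ) * dist x (g₀ • y) := by
        have h2 : ∀ g : G, dist (g • x) ((g * g₀) • y) = dist x (g₀ • y) := by
          intro g; rw [mul_smul, hdist]
        simp only [Equiv.coe_mulRight]
        rw [Finset.sum_congr rfl fun g _ => h2 g, Finset.sum_const, Finset.card_univ,
          nsmul_eq_mul]
      rw [hm, ← hsum]
      exact ciInf_le (Finite.bddBelow_range _) _
  constructor
  · intro x y
    rw [← key x y, one_div, inv_mul_cancel_left₀ hk.ne']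
  · intro x y h
    congr 1
    rw [← key, ← key]
    congr 1
    have h3 : ∀ g : G, dist (h • x) (g • y) = dist x ((h⁻¹ * g) • y) := by
      intro g
      rw [mul_smul, ← hdist h⁻¹ (h • x) (g • y)]
      simp [smul_smul]
    calc (⨅ g : G, dist (h • x) (g • y)) = ⨅ g : G, dist x ((h⁻¹ * g) • y) := by
          exact iInf_congr h3
      _ = ⨅ g : G, dist x (g • y) :=
          (Equiv.mulLeft h⁻¹).surjective.iInf_comp fun g => dist x (g • y)
end
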